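/- arXiv:0903.3311 — 8 statements merged into one kernel-verified Lean document; each statement's English description precedes it below -/
import Mathlib

section
/- In a Cartesian effect category, the first projection of a left semi-pure product depends on the second factor only through its effect: for pure v₁ : X₁ → Y₁ and f₂, f₂' : X₂ → Y₂, if E(f₂) = E(f₂') then q₁ ∘ (v₁ ⋉ f₂) = q₁ ∘ (v₁ ⋉ f₂'). -/
open CategoryTheory

universe u v

/-- A Cartesian effect category: a category `K` with a wide subcategory of pure
morphisms, a pure terminal object, a consistency relation, a binary product on the
pure subcategory, and semi-pure products extending it. -/
structure CEC (K : Type u) [Category.{v} K] where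
  isPure : ∀ {X Y : K}, (X ⟶ Y) → Prop
  pure_id : ∀ X : K, isPure (𝟙 X)
  pure_comp : ∀ {X Y Z : K} {f : X ⟶ Y} {g : Y ⟶ Z}, isPure f → isPure g → isPure (f ≫ g)
  one : K
  bang : ∀ X : K, X ⟶ one
  bang_pure : ∀ X : K, isPure (bang X)
  bang_uniq : ∀ {X : K} (g : X ⟶ one), isPure g → g = bang X
  cons : ∀ {X Y : K}, (X ⟶ Y) → (X ⟶ Y) → Prop
  cons_refl : ∀ {X Y : K} {v : X ⟶ Y}, isPure v → cons v v
  cons_comp : ∀ {X Y Y' Z : K} {f : X ⟶ Y} {g : Y ⟶ Z} {u : Y ⟶ Y'} {v : X ⟶ Y'} {w : Y' ⟶ Z},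
    isPure u → isPure v → isPure w → cons (f ≫ u) v → cons g (u ≫ w) → cons (f ≫ g) (v ≫ w)
  compl : ∀ {X Y : K} {f f' : X ⟶ Y}, f ≫ bang Y = f' ≫ bang Y →
    (∃ v : X ⟶ Y, isPure v ∧ cons f v ∧ cons f' v) → f = f'
  pr : K → K → K
  pfst : ∀ X Y : K, pr X Y ⟶ X
  psnd : ∀ X Y : K, pr X Y ⟶ Y
  pfst_pure : ∀ X Y : K, isPure (pfst X Y)
  psnd_pure : ∀ X Y : K, isPure (psnd X Y)
  lift : ∀ {X Y Z : K}, (X ⟶ Y) → (X ⟶ Z) → (X ⟶ pr Y Z)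
  lift_pure : ∀ {X Y Z : K} {f : X ⟶ Y} {g : X ⟶ Z}, isPure f → isPure g → isPure (lift f g)
  lift_fst : ∀ {X Y Z : K} {f : X ⟶ Y} {g : X ⟶ Z}, isPure f → isPure g →
    lift f g ≫ pfst Y Z = f
  lift_snd : ∀ {X Y Z : K} {f : X ⟶ Y} {g : X ⟶ Z}, isPure f → isPure g →
    lift f g ≫ psnd Y Z = g
  lift_uniq : ∀ {X Y Z : K} {f : X ⟶ Y} {g : X ⟶ Z} {h : X ⟶ pr Y Z},
    isPure f → isPure g → isPure h → h ≫ pfst Y Z = f → h ≫ psnd Y Z = g → h = lift f g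
  lprod : ∀ {X₁ Y₁ X₂ Y₂ : K}, (X₁ ⟶ Y₁) → (X₂ ⟶ Y₂) → (pr X₁ X₂ ⟶ pr Y₁ Y₂)
  rprod : ∀ {X₁ Y₁ X₂ Y₂ : K}, (X₁ ⟶ Y₁) → (X₂ ⟶ Y₂) → (pr X₁ X₂ ⟶ pr Y₁ Y₂)
  lprod_fst : ∀ {X₁ Y₁ X₂ Y₂ : K} {v₁ : X₁ ⟶ Y₁} (f₂ : X₂ ⟶ Y₂), isPure v₁ →
    cons (lprod v₁ f₂ ≫ pfst Y₁ Y₂) (pfst X₁ X₂ ≫ v₁)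
  lprod_snd : ∀ {X₁ Y₁ X₂ Y₂ : K} {v₁ : X₁ ⟶ Y₁} (f₂ : X₂ ⟶ Y₂), isPure v₁ →
    lprod v₁ f₂ ≫ psnd Y₁ Y₂ = psnd X₁ X₂ ≫ f₂
  lprod_uniq : ∀ {X₁ Y₁ X₂ Y₂ : K} {v₁ : X₁ ⟶ Y₁} {f₂ : X₂ ⟶ Y₂} {h : pr X₁ X₂ ⟶ pr Y₁ Y₂},
    isPure v₁ → cons (h ≫ pfst Y₁ Y₂) (pfst X₁ X₂ ≫ v₁) →
    h ≫ psnd Y₁ Y₂ = psnd X₁ X₂ ≫ f₂ → h = lprod v₁ f₂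
  rprod_fst : ∀ {X₁ Y₁ X₂ Y₂ : K} (f₁ : X₁ ⟶ Y₁) {v₂ : X₂ ⟶ Y₂}, isPure v₂ →
    rprod f₁ v₂ ≫ pfst Y₁ Y₂ = pfst X₁ X₂ ≫ f₁
  rprod_snd : ∀ {X₁ Y₁ X₂ Y₂ : K} (f₁ : X₁ ⟶ Y₁) {v₂ : X₂ ⟶ Y₂}, isPure v₂ →
    cons (rprod f₁ v₂ ≫ psnd Y₁ Y₂) (psnd X₁ X₂ ≫ v₂)
  rprod_uniq : ∀ {X₁ Y₁ X₂ Y₂ : K} {f₁ : X₁ ⟶ Y₁} {v₂ : X₂ ⟶ Y₂} {h : pr X₁ X₂ ⟶ pr Y₁ Y₂},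
    isPure v₂ → h ≫ pfst Y₁ Y₂ = pfst X₁ X₂ ≫ f₁ →
    cons (h ≫ psnd Y₁ Y₂) (psnd X₁ X₂ ≫ v₂) → h = rprod f₁ v₂
  lprod_ext : ∀ {X₁ Y₁ X₂ Y₂ : K} {v₁ : X₁ ⟶ Y₁} {v₂ : X₂ ⟶ Y₂}, isPure v₁ → isPure v₂ →
    lprod v₁ v₂ = lift (pfst X₁ X₂ ≫ v₁) (psnd X₁ X₂ ≫ v₂)
  rprod_ext : ∀ {X₁ Y₁ X₂ Y₂ : K} {v₁ : X₁ ⟶ Y₁} {v₂ : X₂ ⟶ Y₂}, isPure v₁ → isPure v₂ →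
    rprod v₁ v₂ = lift (pfst X₁ X₂ ≫ v₁) (psnd X₁ X₂ ≫ v₂)

namespace CEC

variable {K : Type u} [Category.{v} K] (E : CEC K)

/-- The pure swap morphism `c_{X,Y} : X×Y ⟶ Y×X`. -/
def swap (X Y : K) : E.pr X Y ⟶ E.pr Y X := E.lift (E.psnd X Y) (E.pfst X Y)

/-- The left sequential product `f₁ ⋉ f₂ = (id ⋉ f₂) ∘ (f₁ ⋊ id)`. -/
def seqL {X₁ Y₁ X₂ Y₂ : K} (f₁ : X₁ ⟶ Y₁) (f₂ : X₂ ⟶ Y₂) : E.pr X₁ X₂ ⟶ E.pr Y₁ Y₂ :=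
  E.rprod f₁ (𝟙 X₂) ≫ E.lprod (𝟙 Y₁) f₂

/-- The right sequential product `f₁ ⋊ f₂ = (f₁ ⋊ id) ∘ (id ⋉ f₂)`. -/
def seqR {X₁ Y₁ X₂ Y₂ : K} (f₁ : X₁ ⟶ Y₁) (f₂ : X₂ ⟶ Y₂) : E.pr X₁ X₂ ⟶ E.pr Y₁ Y₂ :=
  E.lprod (𝟙 X₁) f₂ ≫ E.rprod f₁ (𝟙 Y₂)

/-- The pure associativity morphism `a_{X,Y,Z} : (X×Y)×Z ⟶ X×(Y×Z)`. -/
def assoc (X Y Z : K) : E.pr (E.pr X Y) Z ⟶ E.pr X (E.pr Y Z) :=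
  E.lift (E.pfst (E.pr X Y) Z ≫ E.pfst X Y)
    (E.lift (E.pfst (E.pr X Y) Z ≫ E.psnd X Y) (E.psnd (E.pr X Y) Z))

end CEC

/-- the first projection of a left semi-pure product depends on the
second factor only through its effect. -/
theorem CEC.lprod_fst_depends_only_on_effect {K : Type u} [Category.{v} K] (E : CEC K)
    {X₁ Y₁ X₂ Y₂ : K} (v₁ : X₁ ⟶ Y₁) (hv₁ : E.isPure v₁) (f₂ f₂' : X₂ ⟶ Y₂)
    (heff : f₂ ≫ E.bang Y₂ = f₂' ≫ E.bang Y₂) :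
    E.lprod v₁ f₂ ≫ E.pfst Y₁ Y₂ = E.lprod v₁ f₂' ≫ E.pfst Y₁ Y₂ := by
  have hb1 : E.pfst Y₁ Y₂ ≫ E.bang Y₁ = E.bang (E.pr Y₁ Y₂) :=
    E.bang_uniq _ (E.pure_comp (E.pfst_pure _ _) (E.bang_pure _))
  have hb2 : E.psnd Y₁ Y₂ ≫ E.bang Y₂ = E.bang (E.pr Y₁ Y₂) :=
    E.bang_uniq _ (E.pure_comp (E.psnd_pure _ _) (E.bang_pure _))
  have key : ∀ g : X₂ ⟶ Y₂, (E.lprod v₁ g ≫ E.pfst Y₁ Y₂) ≫ E.bang Y₁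
      = E.psnd X₁ X₂ ≫ g ≫ E.bang Y₂ := by
    intro g
    rw [Category.assoc, hb1, ← hb2, ← Category.assoc, E.lprod_snd g hv₁, Category.assoc]
  apply E.compl
  · simp only [key, heff]
  · exact ⟨E.pfst X₁ X₂ ≫ v₁, E.pure_comp (E.pfst_pure _ _) hv₁,
      E.lprod_fst f₂ hv₁, E.lprod_fst f₂' hv₁⟩
end

section
/- In a Cartesian effect category, every pure morphism is central: for every pure v : X₁ → Y₁ and every f : X₂ → Y₂, the left sequential product v ⋉ f (defined as (id ⋉ f) ∘ (v ⋊ id)) equals the right sequential product v ⋊ f (defined as (v ⋊ id) ∘ (id ⋉ f)). -/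
open CategoryTheory

universe u v

/-- every pure morphism is central: its left and right sequential
products with any morphism coincide. -/
theorem CEC.pure_central {K : Type u} [Category.{v} K] (E : CEC K)
    {X₁ Y₁ X₂ Y₂ : K} (v : X₁ ⟶ Y₁) (hv : E.isPure v) (f : X₂ ⟶ Y₂) :
    E.seqL v f = E.seqR v f := by
  -- `rprod v 𝟙` (at both stages) is pure with explicit projections.
  have hrX : E.rprod v (𝟙 X₂) = E.lift (E.pfst X₁ X₂ ≫ v) (E.psnd X₁ X₂ ≫ 𝟙 X₂) :=
    E.rprod_ext hv (E.pure_id _)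
  have hrY : E.rprod v (𝟙 Y₂) = E.lift (E.pfst X₁ Y₂ ≫ v) (E.psnd X₁ Y₂ ≫ 𝟙 Y₂) :=
    E.rprod_ext hv (E.pure_id _)
  have hp1 : E.isPure (E.pfst X₁ X₂ ≫ v) := E.pure_comp (E.pfst_pure _ _) hv
  have hp1' : E.isPure (E.pfst X₁ Y₂ ≫ v) := E.pure_comp (E.pfst_pure _ _) hv
  have hq1 : E.isPure (E.psnd X₁ X₂ ≫ 𝟙 X₂) := E.pure_comp (E.psnd_pure _ _) (E.pure_id _)
  have hq1' : E.isPure (E.psnd X₁ Y₂ ≫ 𝟙 Y₂) := E.pure_comp (E.psnd_pure _ _) (E.pure_id _)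
  have hrXpure : E.isPure (E.rprod v (𝟙 X₂)) := hrX ▸ E.lift_pure hp1 hq1
  have hrYpure : E.isPure (E.rprod v (𝟙 Y₂)) := hrY ▸ E.lift_pure hp1' hq1'
  have hrX_fst : E.rprod v (𝟙 X₂) ≫ E.pfst Y₁ X₂ = E.pfst X₁ X₂ ≫ v := by
    rw [hrX, E.lift_fst hp1 hq1]
  have hrX_snd : E.rprod v (𝟙 X₂) ≫ E.psnd Y₁ X₂ = E.psnd X₁ X₂ := by
    rw [hrX, E.lift_snd hp1 hq1, Category.comp_id]
  have hrY_fst : E.rprod v (𝟙 Y₂) ≫ E.pfst Y₁ Y₂ = E.pfst X₁ Y₂ ≫ v := by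
    rw [hrY, E.lift_fst hp1' hq1']
  have hrY_snd : E.rprod v (𝟙 Y₂) ≫ E.psnd Y₁ Y₂ = E.psnd X₁ Y₂ := by
    rw [hrY, E.lift_snd hp1' hq1', Category.comp_id]
  -- seqL = lprod v f
  have hL : E.seqL v f = E.lprod v f := by
    apply E.lprod_uniq hv
    · -- cons ((rprod v 𝟙 ≫ lprod 𝟙 f) ≫ pfst) (pfst ≫ v)
      have := E.cons_comp (f := E.rprod v (𝟙 X₂)) (g := E.lprod (𝟙 Y₁) f ≫ E.pfst Y₁ Y₂)
        (u := E.pfst Y₁ X₂) (v := E.pfst X₁ X₂ ≫ v) (w := 𝟙 Y₁)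
        (E.pfst_pure _ _) hp1 (E.pure_id _)
        (by rw [hrX_fst]; exact E.cons_refl hp1)
        (by simpa using E.lprod_fst f (E.pure_id Y₁))
      simpa [CEC.seqL, Category.assoc] using this
    · rw [CEC.seqL, Category.assoc, E.lprod_snd f (E.pure_id _), ← Category.assoc,
        hrX_snd]
  -- seqR = lprod v f
  have hR : E.seqR v f = E.lprod v f := by
    apply E.lprod_uniq hv
    · have := E.cons_comp (f := E.lprod (𝟙 X₁) f) (g := E.pfst X₁ Y₂ ≫ v)
        (u := E.pfst X₁ Y₂) (v := E.pfst X₁ X₂) (w := v)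
        (E.pfst_pure _ _) (E.pfst_pure _ _) hv
        (by simpa using E.lprod_fst f (E.pure_id _))
        (E.cons_refl hp1')
      have h2 : E.seqR v f ≫ E.pfst Y₁ Y₂ = E.lprod (𝟙 X₁) f ≫ (E.pfst X₁ Y₂ ≫ v) := by
        rw [CEC.seqR, Category.assoc, hrY_fst]
      rw [h2]; exact this
    · rw [CEC.seqR, Category.assoc, hrY_snd, E.lprod_snd f (E.pure_id _)]
  rw [hL, hR]
end

section
/- In a Cartesian effect category, the left sequential product extends the left semi-pure product: for pure v : X₁ → Y₁ and f : X₂ → Y₂, (id_{Y₁} ⋉ f) ∘ (v ⋊ id_{X₂}) = v ⋉ f. -/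
open CategoryTheory

universe u v

/-- the left sequential product extends the left semi-pure product:
for pure `v`, `(id ⋉ f) ∘ (v ⋊ id) = v ⋉ f`. -/
theorem CEC.seqL_extends_lprod {K : Type u} [Category.{v} K] (E : CEC K)
    {X₁ Y₁ X₂ Y₂ : K} (v : X₁ ⟶ Y₁) (hv : E.isPure v) (f : X₂ ⟶ Y₂) :
    E.rprod v (𝟙 X₂) ≫ E.lprod (𝟙 Y₁) f = E.lprod v f := by
  apply E.lprod_uniq hv
  · have h1 : E.rprod v (𝟙 X₂) ≫ E.pfst Y₁ X₂ = E.pfst X₁ X₂ ≫ v :=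
      E.rprod_fst v (E.pure_id X₂)
    have hc : E.cons ((E.rprod v (𝟙 X₂) ≫ E.lprod (𝟙 Y₁) f) ≫ E.pfst Y₁ Y₂)
        ((E.pfst X₁ X₂ ≫ v) ≫ 𝟙 Y₁) := by
      rw [Category.assoc]
      exact E.cons_comp (E.pfst_pure Y₁ X₂) (E.pure_comp (E.pfst_pure X₁ X₂) hv)
        (E.pure_id Y₁)
        (by rw [h1]; exact E.cons_refl (E.pure_comp (E.pfst_pure X₁ X₂) hv))
        (by simpa using E.lprod_fst f (E.pure_id Y₁))
    simpa using hc
  · have hpure : E.isPure (E.rprod v (𝟙 X₂)) := by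
      rw [E.rprod_ext hv (E.pure_id X₂)]
      exact E.lift_pure (E.pure_comp (E.pfst_pure X₁ X₂) hv)
        (E.pure_comp (E.psnd_pure X₁ X₂) (E.pure_id X₂))
    have h2 : E.rprod v (𝟙 X₂) ≫ E.psnd Y₁ X₂ = E.psnd X₁ X₂ := by
      rw [E.rprod_ext hv (E.pure_id X₂),
        E.lift_snd (E.pure_comp (E.pfst_pure X₁ X₂) hv)
          (E.pure_comp (E.psnd_pure X₁ X₂) (E.pure_id X₂)), Category.comp_id]
    rw [Category.assoc, E.lprod_snd f (E.pure_id Y₁), ← Category.assoc, h2]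
end

section
/- In a Cartesian effect category, left semi-pure products with fixed first identity compose: for every object X₁ and morphisms f₂ : X₂ → Y₂, g₂ : Y₂ → Z₂, (id_{X₁} ⋉ g₂) ∘ (id_{X₁} ⋉ f₂) = id_{X₁} ⋉ (g₂ ∘ f₂). -/
open CategoryTheory

universe u v

/-- left semi-pure products with fixed first identity compose:
`(id ⋉ g₂) ∘ (id ⋉ f₂) = id ⋉ (g₂ ∘ f₂)`. -/
theorem CEC.lprod_id_comp {K : Type u} [Category.{v} K] (E : CEC K)
    (X₁ : K) {X₂ Y₂ Z₂ : K} (f₂ : X₂ ⟶ Y₂) (g₂ : Y₂ ⟶ Z₂) :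
    E.lprod (𝟙 X₁) f₂ ≫ E.lprod (𝟙 X₁) g₂ = E.lprod (𝟙 X₁) (f₂ ≫ g₂) := by
  apply E.lprod_uniq (E.pure_id X₁)
  · have h1 := E.lprod_fst f₂ (E.pure_id X₁)
    have h2 := E.lprod_fst g₂ (E.pure_id X₁)
    rw [Category.comp_id] at h1
    have h3 := E.cons_comp (E.pfst_pure X₁ Y₂) (E.pfst_pure X₁ X₂) (E.pure_id X₁) h1 h2
    simpa [Category.assoc] using h3
  · rw [Category.assoc, E.lprod_snd g₂ (E.pure_id X₁), ← Category.assoc,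
      E.lprod_snd f₂ (E.pure_id X₁), Category.assoc]
end

section
/- In a Cartesian effect category, sequential products compose along central morphisms: for f₁ : X₁ → Y₁, f₂ : X₂ → Y₂, g₂ : Y₂ → Z₂, and a central morphism k₁ : Y₁ → Z₁ (meaning k₁ ⋉ g = k₁ ⋊ g for all g), one has (k₁ ⋉ g₂) ∘ (f₁ ⋉ f₂) = (k₁ ∘ f₁) ⋉ (g₂ ∘ f₂). -/
open CategoryTheory

universe u v

namespace CEC

variable {K : Type u} [Category.{v} K] (E : CEC K)

lemma rprod_comp_id {X₁ Y₁ Z₁ : K} (f : X₁ ⟶ Y₁) (g : Y₁ ⟶ Z₁) (X₂ : K) :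
    E.rprod f (𝟙 X₂) ≫ E.rprod g (𝟙 X₂) = E.rprod (f ≫ g) (𝟙 X₂) := by
  apply E.rprod_uniq (E.pure_id _)
  · rw [Category.assoc, E.rprod_fst g (E.pure_id _), ← Category.assoc,
      E.rprod_fst f (E.pure_id _), Category.assoc]
  · have h1 : E.cons (E.rprod f (𝟙 X₂) ≫ E.psnd Y₁ X₂) (E.psnd X₁ X₂) := by
      have := E.rprod_snd f (v₂ := 𝟙 X₂) (E.pure_id _)
      rwa [Category.comp_id] at this
    have h2 := E.rprod_snd g (v₂ := 𝟙 X₂) (E.pure_id _)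
    have := E.cons_comp (E.psnd_pure Y₁ X₂) (E.psnd_pure X₁ X₂) (E.pure_id _) h1 h2
    rwa [← Category.assoc] at this

lemma lprod_id_comp_s14 {X₂ Y₂ Z₂ : K} (f : X₂ ⟶ Y₂) (g : Y₂ ⟶ Z₂) (X₁ : K) :
    E.lprod (𝟙 X₁) f ≫ E.lprod (𝟙 X₁) g = E.lprod (𝟙 X₁) (f ≫ g) := by
  apply E.lprod_uniq (E.pure_id _)
  · have h1 : E.cons (E.lprod (𝟙 X₁) f ≫ E.pfst X₁ Y₂) (E.pfst X₁ X₂) := by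
      have := E.lprod_fst f (v₁ := 𝟙 X₁) (E.pure_id _)
      rwa [Category.comp_id] at this
    have h2 := E.lprod_fst g (v₁ := 𝟙 X₁) (E.pure_id _)
    have := E.cons_comp (E.pfst_pure X₁ Y₂) (E.pfst_pure X₁ X₂) (E.pure_id _) h1 h2
    rwa [← Category.assoc] at this
  · rw [Category.assoc, E.lprod_snd g (E.pure_id _), ← Category.assoc,
      E.lprod_snd f (E.pure_id _), Category.assoc]

end CEC

/-- sequential products compose along central morphisms:
`(k₁ ⋉ g₂) ∘ (f₁ ⋉ f₂) = (k₁ ∘ f₁) ⋉ (g₂ ∘ f₂)` when `k₁` is central. -/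
theorem CEC.seqL_comp_central {K : Type u} [Category.{v} K] (E : CEC K)
    {X₁ Y₁ Z₁ X₂ Y₂ Z₂ : K} (f₁ : X₁ ⟶ Y₁) (k₁ : Y₁ ⟶ Z₁)
    (f₂ : X₂ ⟶ Y₂) (g₂ : Y₂ ⟶ Z₂)
    (hk : ∀ {A B : K} (g : A ⟶ B), E.seqL k₁ g = E.seqR k₁ g) :
    E.seqL f₁ f₂ ≫ E.seqL k₁ g₂ = E.seqL (f₁ ≫ k₁) (f₂ ≫ g₂) := by
  have hc : E.lprod (𝟙 Y₁) f₂ ≫ E.rprod k₁ (𝟙 Y₂) = E.rprod k₁ (𝟙 X₂) ≫ E.lprod (𝟙 Z₁) f₂ :=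
    (hk f₂).symm
  simp only [CEC.seqL, Category.assoc]
  rw [← Category.assoc (E.lprod (𝟙 Y₁) f₂), hc, Category.assoc,
    E.lprod_id_comp_s14, ← Category.assoc, E.rprod_comp_id]
end

section
/- In a Cartesian effect category, the center (objects of K together with central morphisms) is a wide subcategory of K containing C: identities are central, composites of central morphisms are central, and every pure morphism is central. -/
open CategoryTheory

universe u v

/-- A morphism is central if its left and right sequential products with every
morphism (on either side) coincide. -/
def CEC.Central {K : Type u} [Category.{v} K] (E : CEC K) {X Y : K} (k : X ⟶ Y) : Prop :=
  (∀ {A B : K} (f : A ⟶ B), E.seqL k f = E.seqR k f) ∧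
  (∀ {A B : K} (f : A ⟶ B), E.seqL f k = E.seqR f k)

namespace CEC

variable {K : Type u} [Category.{v} K] (E : CEC K)

lemma rprod_pure' {X₁ Y₁ X₂ Y₂ : K} {v₁ : X₁ ⟶ Y₁} {v₂ : X₂ ⟶ Y₂}
    (h₁ : E.isPure v₁) (h₂ : E.isPure v₂) : E.isPure (E.rprod v₁ v₂) := by
  rw [E.rprod_ext h₁ h₂]
  exact E.lift_pure (E.pure_comp (E.pfst_pure _ _) h₁) (E.pure_comp (E.psnd_pure _ _) h₂)

lemma lprod_pure' {X₁ Y₁ X₂ Y₂ : K} {v₁ : X₁ ⟶ Y₁} {v₂ : X₂ ⟶ Y₂}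
    (h₁ : E.isPure v₁) (h₂ : E.isPure v₂) : E.isPure (E.lprod v₁ v₂) := by
  rw [E.lprod_ext h₁ h₂]
  exact E.lift_pure (E.pure_comp (E.pfst_pure _ _) h₁) (E.pure_comp (E.psnd_pure _ _) h₂)

lemma rprod_snd' {X₁ Y₁ X₂ Y₂ : K} {v₁ : X₁ ⟶ Y₁} {v₂ : X₂ ⟶ Y₂}
    (h₁ : E.isPure v₁) (h₂ : E.isPure v₂) :
    E.rprod v₁ v₂ ≫ E.psnd Y₁ Y₂ = E.psnd X₁ X₂ ≫ v₂ := by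
  rw [E.rprod_ext h₁ h₂]
  exact E.lift_snd (E.pure_comp (E.pfst_pure _ _) h₁) (E.pure_comp (E.psnd_pure _ _) h₂)

lemma lprod_fst' {X₁ Y₁ X₂ Y₂ : K} {v₁ : X₁ ⟶ Y₁} {v₂ : X₂ ⟶ Y₂}
    (h₁ : E.isPure v₁) (h₂ : E.isPure v₂) :
    E.lprod v₁ v₂ ≫ E.pfst Y₁ Y₂ = E.pfst X₁ X₂ ≫ v₁ := by
  rw [E.lprod_ext h₁ h₂]
  exact E.lift_fst (E.pure_comp (E.pfst_pure _ _) h₁) (E.pure_comp (E.psnd_pure _ _) h₂)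

/-- For pure `v`, `v ⋉ f = v × f`. -/
lemma seqL_pure_left {X₁ Y₁ X₂ Y₂ : K} {v : X₁ ⟶ Y₁} (f : X₂ ⟶ Y₂) (hv : E.isPure v) :
    E.seqL v f = E.lprod v f := by
  apply E.lprod_uniq hv
  · have hb : E.isPure (E.pfst X₁ X₂ ≫ v) := E.pure_comp (E.pfst_pure _ _) hv
    have c1 : E.cons (E.rprod v (𝟙 X₂) ≫ E.pfst Y₁ X₂) (E.pfst X₁ X₂ ≫ v) := by
      rw [E.rprod_fst v (E.pure_id _)]; exact E.cons_refl hb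
    have c2 : E.cons ((E.lprod (𝟙 Y₁) f ≫ E.pfst Y₁ Y₂)) (E.pfst Y₁ X₂ ≫ 𝟙 Y₁) :=
      E.lprod_fst f (E.pure_id _)
    have h := E.cons_comp (E.pfst_pure Y₁ X₂) hb (E.pure_id Y₁) c1 c2
    simpa only [seqL, Category.assoc, Category.comp_id] using h
  · show (E.rprod v (𝟙 X₂) ≫ E.lprod (𝟙 Y₁) f) ≫ E.psnd Y₁ Y₂ = _
    rw [Category.assoc, E.lprod_snd f (E.pure_id _), ← Category.assoc,
      E.rprod_snd' hv (E.pure_id _), Category.assoc, Category.id_comp]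

/-- For pure `v`, `v ⋊ f = v × f`. -/
lemma seqR_pure_left {X₁ Y₁ X₂ Y₂ : K} {v : X₁ ⟶ Y₁} (f : X₂ ⟶ Y₂) (hv : E.isPure v) :
    E.seqR v f = E.lprod v f := by
  apply E.lprod_uniq hv
  · have c1 : E.cons (E.lprod (𝟙 X₁) f ≫ E.pfst X₁ Y₂) (E.pfst X₁ X₂) := by
      have := E.lprod_fst f (E.pure_id X₁)
      simpa only [Category.comp_id] using this
    have c2 : E.cons (E.rprod v (𝟙 Y₂) ≫ E.pfst Y₁ Y₂) (E.pfst X₁ Y₂ ≫ v) := by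
      rw [E.rprod_fst v (E.pure_id _)]
      exact E.cons_refl (E.pure_comp (E.pfst_pure _ _) hv)
    have h := E.cons_comp (E.pfst_pure X₁ Y₂) (E.pfst_pure X₁ X₂) hv c1 c2
    simpa only [seqR, Category.assoc] using h
  · show (E.lprod (𝟙 X₁) f ≫ E.rprod v (𝟙 Y₂)) ≫ E.psnd Y₁ Y₂ = _
    rw [Category.assoc, E.rprod_snd' hv (E.pure_id _), ← Category.assoc,
      E.lprod_snd f (E.pure_id _), Category.assoc, Category.comp_id]

/-- For pure `v`, `f ⋉ v = f × v`. -/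
lemma seqL_pure_right {X₁ Y₁ X₂ Y₂ : K} (f : X₁ ⟶ Y₁) {v : X₂ ⟶ Y₂} (hv : E.isPure v) :
    E.seqL f v = E.rprod f v := by
  apply E.rprod_uniq hv
  · show (E.rprod f (𝟙 X₂) ≫ E.lprod (𝟙 Y₁) v) ≫ E.pfst Y₁ Y₂ = _
    rw [Category.assoc, E.lprod_fst' (E.pure_id _) hv, ← Category.assoc,
      E.rprod_fst f (E.pure_id _), Category.assoc, Category.comp_id]
  · have c1 : E.cons (E.rprod f (𝟙 X₂) ≫ E.psnd Y₁ X₂) (E.psnd X₁ X₂) := by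
      have := E.rprod_snd f (E.pure_id X₂)
      simpa only [Category.comp_id] using this
    have c2 : E.cons (E.lprod (𝟙 Y₁) v ≫ E.psnd Y₁ Y₂) (E.psnd Y₁ X₂ ≫ v) := by
      rw [E.lprod_snd v (E.pure_id _)]
      exact E.cons_refl (E.pure_comp (E.psnd_pure _ _) hv)
    have h := E.cons_comp (E.psnd_pure Y₁ X₂) (E.psnd_pure X₁ X₂) hv c1 c2
    simpa only [seqL, Category.assoc] using h

/-- For pure `v`, `f ⋊ v = f × v`. -/
lemma seqR_pure_right {X₁ Y₁ X₂ Y₂ : K} (f : X₁ ⟶ Y₁) {v : X₂ ⟶ Y₂} (hv : E.isPure v) :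
    E.seqR f v = E.rprod f v := by
  apply E.rprod_uniq hv
  · show (E.lprod (𝟙 X₁) v ≫ E.rprod f (𝟙 Y₂)) ≫ E.pfst Y₁ Y₂ = _
    rw [Category.assoc, E.rprod_fst f (E.pure_id _), ← Category.assoc,
      E.lprod_fst' (E.pure_id _) hv, Category.assoc, Category.id_comp]
  · have hb : E.isPure (E.psnd X₁ X₂ ≫ v) := E.pure_comp (E.psnd_pure _ _) hv
    have c1 : E.cons (E.lprod (𝟙 X₁) v ≫ E.psnd X₁ Y₂) (E.psnd X₁ X₂ ≫ v) := by
      rw [E.lprod_snd v (E.pure_id _)]; exact E.cons_refl hb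
    have c2 : E.cons (E.rprod f (𝟙 Y₂) ≫ E.psnd Y₁ Y₂) (E.psnd X₁ Y₂ ≫ 𝟙 Y₂) :=
      E.rprod_snd f (E.pure_id _)
    have h := E.cons_comp (E.psnd_pure X₁ Y₂) hb (E.pure_id Y₂) c1 c2
    simpa only [seqR, Category.assoc, Category.comp_id] using h

lemma pure_central_s15 {X Y : K} (v : X ⟶ Y) (hv : E.isPure v) : E.Central v :=
  ⟨fun f => by rw [E.seqL_pure_left f hv, E.seqR_pure_left f hv],
   fun f => by rw [E.seqL_pure_right f hv, E.seqR_pure_right f hv]⟩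

/-- Functoriality of `- ⋊ id` in the first argument. -/
lemma rprod_id_comp {X Y Z A : K} (f : X ⟶ Y) (g : Y ⟶ Z) :
    E.rprod (f ≫ g) (𝟙 A) = E.rprod f (𝟙 A) ≫ E.rprod g (𝟙 A) := by
  refine (E.rprod_uniq (E.pure_id A) ?_ ?_).symm
  · rw [Category.assoc, E.rprod_fst g (E.pure_id _), ← Category.assoc,
      E.rprod_fst f (E.pure_id _), Category.assoc]
  · have c1 : E.cons (E.rprod f (𝟙 A) ≫ E.psnd Y A) (E.psnd X A) := by
      have := E.rprod_snd f (E.pure_id A)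
      simpa only [Category.comp_id] using this
    have c2 : E.cons (E.rprod g (𝟙 A) ≫ E.psnd Z A) (E.psnd Y A ≫ 𝟙 A) :=
      E.rprod_snd g (E.pure_id A)
    have h := E.cons_comp (E.psnd_pure Y A) (E.psnd_pure X A) (E.pure_id A) c1 c2
    simpa only [Category.assoc] using h

/-- Functoriality of `id ⋉ -` in the second argument. -/
lemma lprod_id_comp_s15 {X Y Z A : K} (f : X ⟶ Y) (g : Y ⟶ Z) :
    E.lprod (𝟙 A) (f ≫ g) = E.lprod (𝟙 A) f ≫ E.lprod (𝟙 A) g := by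
  refine (E.lprod_uniq (E.pure_id A) ?_ ?_).symm
  · have c1 : E.cons (E.lprod (𝟙 A) f ≫ E.pfst A Y) (E.pfst A X) := by
      have := E.lprod_fst f (E.pure_id A)
      simpa only [Category.comp_id] using this
    have c2 : E.cons (E.lprod (𝟙 A) g ≫ E.pfst A Z) (E.pfst A Y ≫ 𝟙 A) :=
      E.lprod_fst g (E.pure_id A)
    have h := E.cons_comp (E.pfst_pure A Y) (E.pfst_pure A X) (E.pure_id A) c1 c2
    simpa only [Category.assoc] using h
  · rw [Category.assoc, E.lprod_snd g (E.pure_id _), ← Category.assoc,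
      E.lprod_snd f (E.pure_id _), Category.assoc]

end CEC

/-- the center is a wide subcategory of `K` containing `C`:
identities are central, composites of central morphisms are central, and every
pure morphism is central. -/
theorem CEC.center_wide_subcategory {K : Type u} [Category.{v} K] (E : CEC K) :
    (∀ X : K, E.Central (𝟙 X)) ∧
    (∀ {X Y Z : K} (f : X ⟶ Y) (g : Y ⟶ Z),
      E.Central f → E.Central g → E.Central (f ≫ g)) ∧
    (∀ {X Y : K} (v : X ⟶ Y), E.isPure v → E.Central v) := by
  refine ⟨fun X => E.pure_central_s15 _ (E.pure_id X), ?_, fun v hv => E.pure_central_s15 v hv⟩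
  intro X Y Z f g hf hg
  constructor
  · intro A B h
    have e1 : E.seqL (f ≫ g) h =
        E.rprod f (𝟙 A) ≫ E.seqL g h := by
      simp only [seqL, rprod_id_comp, Category.assoc]
    have e2 : E.seqR (f ≫ g) h =
        E.seqR f h ≫ E.rprod g (𝟙 B) := by
      simp only [seqR, rprod_id_comp, Category.assoc]
    rw [e1, hg.1 h, e2, ← hf.1 h]
    simp only [seqL, seqR, Category.assoc]
  · intro A B h
    have e1 : E.seqL h (f ≫ g) =
        E.seqL h f ≫ E.lprod (𝟙 B) g := by
      simp only [seqL, lprod_id_comp_s15, Category.assoc]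
    have e2 : E.seqR h (f ≫ g) =
        E.lprod (𝟙 A) f ≫ E.seqR h g := by
      simp only [seqR, lprod_id_comp_s15, Category.assoc]
    rw [e1, hf.2 h, e2, ← hg.2 h]
    simp only [seqL, seqR, Category.assoc]
end

section
/- In a Cartesian effect category, the swap naturality holds for arbitrary morphisms with respect to sequential products: for all f₁ : X₁ → Y₁ and f₂ : X₂ → Y₂, c_{Y₁,Y₂} ∘ (f₁ ⋊ f₂) = (f₂ ⋉ f₁) ∘ c_{X₁,X₂}, where c denotes the pure swap isomorphisms induced by the product on C. -/
open CategoryTheory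

universe u v

namespace CEC

variable {K : Type u} [Category.{v} K] (E : CEC K)

lemma swap_pure (X Y : K) : E.isPure (E.swap X Y) :=
  E.lift_pure (E.psnd_pure X Y) (E.pfst_pure X Y)

lemma swap_fst (X Y : K) : E.swap X Y ≫ E.pfst Y X = E.psnd X Y :=
  E.lift_fst (E.psnd_pure X Y) (E.pfst_pure X Y)

lemma swap_snd (X Y : K) : E.swap X Y ≫ E.psnd Y X = E.pfst X Y :=
  E.lift_snd (E.psnd_pure X Y) (E.pfst_pure X Y)

lemma swap_swap (X Y : K) : E.swap X Y ≫ E.swap Y X = 𝟙 (E.pr X Y) := by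
  have h1 : 𝟙 (E.pr X Y) = E.lift (E.pfst X Y) (E.psnd X Y) :=
    E.lift_uniq (E.pfst_pure X Y) (E.psnd_pure X Y) (E.pure_id _)
      (Category.id_comp _) (Category.id_comp _)
  have h2 : E.swap X Y ≫ E.swap Y X = E.lift (E.pfst X Y) (E.psnd X Y) :=
    E.lift_uniq (E.pfst_pure X Y) (E.psnd_pure X Y)
      (E.pure_comp (E.swap_pure X Y) (E.swap_pure Y X))
      (by rw [Category.assoc, E.swap_fst, E.swap_snd])
      (by rw [Category.assoc, E.swap_snd, E.swap_fst])
  rw [h2, h1]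

/-- `swap ≫ (rprod f v) ≫ swap = lprod v f`. -/
lemma swap_rprod_swap {X₁ Y₁ X₂ Y₂ : K} (f : X₂ ⟶ Y₂) {v : X₁ ⟶ Y₁} (hv : E.isPure v) :
    E.swap X₁ X₂ ≫ E.rprod f v ≫ E.swap Y₂ Y₁ = E.lprod v f := by
  apply E.lprod_uniq hv
  · -- cons ((swap ≫ rprod f v ≫ swap) ≫ pfst) (pfst ≫ v)
    have hfst : (E.swap X₁ X₂ ≫ E.rprod f v ≫ E.swap Y₂ Y₁) ≫ E.pfst Y₁ Y₂
        = E.swap X₁ X₂ ≫ (E.rprod f v ≫ E.psnd Y₂ Y₁) := by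
      rw [Category.assoc, Category.assoc, E.swap_fst]
    rw [hfst]
    have hc := E.rprod_snd f hv
    have := E.cons_comp (u := 𝟙 (E.pr X₂ X₁)) (v := E.swap X₁ X₂)
      (w := E.psnd X₂ X₁ ≫ v) (f := E.swap X₁ X₂) (g := E.rprod f v ≫ E.psnd Y₂ Y₁)
      (E.pure_id _) (E.swap_pure _ _) (E.pure_comp (E.psnd_pure _ _) hv)
      (by rw [Category.comp_id]; exact E.cons_refl (E.swap_pure _ _))
      (by rw [Category.id_comp]; exact hc)
    rw [← Category.assoc, ← Category.assoc, E.swap_snd] at this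
    rw [Category.assoc] at this
    exact this
  · rw [Category.assoc, Category.assoc, E.swap_snd, E.rprod_fst f hv,
      ← Category.assoc, E.swap_fst]

lemma rprod_swap {X₁ Y₁ X₂ Y₂ : K} (f : X₂ ⟶ Y₂) {v : X₁ ⟶ Y₁} (hv : E.isPure v) :
    E.rprod f v ≫ E.swap Y₂ Y₁ = E.swap X₂ X₁ ≫ E.lprod v f := by
  rw [← E.swap_rprod_swap f hv, ← Category.assoc, E.swap_swap, Category.id_comp]

lemma lprod_swap {X₁ Y₁ X₂ Y₂ : K} (f : X₂ ⟶ Y₂) {v : X₁ ⟶ Y₁} (hv : E.isPure v) :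
    E.lprod v f ≫ E.swap Y₁ Y₂ = E.swap X₁ X₂ ≫ E.rprod f v := by
  rw [← E.swap_rprod_swap f hv, Category.assoc, Category.assoc, E.swap_swap,
    Category.comp_id]

end CEC

/-- swap naturality for sequential products:
`c ∘ (f₁ ⋊ f₂) = (f₂ ⋉ f₁) ∘ c`. -/
theorem CEC.seq_swap_naturality {K : Type u} [Category.{v} K] (E : CEC K)
    {X₁ Y₁ X₂ Y₂ : K} (f₁ : X₁ ⟶ Y₁) (f₂ : X₂ ⟶ Y₂) :
    E.seqR f₁ f₂ ≫ E.swap Y₁ Y₂ = E.swap X₁ X₂ ≫ E.seqL f₂ f₁ := by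
  unfold seqR seqL
  rw [Category.assoc, E.rprod_swap f₁ (E.pure_id Y₂), ← Category.assoc,
    E.lprod_swap f₂ (E.pure_id X₁), Category.assoc]
end

section
/- In a Cartesian effect category, the associativity naturality holds for the left sequential product: for all f₁ : X₁ → Y₁, f₂ : X₂ → Y₂, f₃ : X₃ → Y₃, a_{Y₁,Y₂,Y₃} ∘ (f₁ ⋉ (f₂ ⋉ f₃)) = ((f₁ ⋉ f₂) ⋉ f₃) ∘ a_{X₁,X₂,X₃}, where a denotes the pure associativity isomorphisms of the product on C. -/
open CategoryTheory

universe u v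

namespace CEC

variable {K : Type u} [Category.{v} K] (E : CEC K)

lemma lift_proj (X Y : K) : E.lift (E.pfst X Y) (E.psnd X Y) = 𝟙 (E.pr X Y) := by
  symm
  exact E.lift_uniq (E.pfst_pure X Y) (E.psnd_pure X Y) (E.pure_id _)
    (Category.id_comp _) (Category.id_comp _)

lemma lprod_one_one (X Y : K) : E.lprod (𝟙 X) (𝟙 Y) = 𝟙 (E.pr X Y) := by
  rw [E.lprod_ext (E.pure_id X) (E.pure_id Y), Category.comp_id, Category.comp_id,
    E.lift_proj]

lemma rprod_one_one (X Y : K) : E.rprod (𝟙 X) (𝟙 Y) = 𝟙 (E.pr X Y) := by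
  rw [E.rprod_ext (E.pure_id X) (E.pure_id Y), Category.comp_id, Category.comp_id,
    E.lift_proj]

lemma rprod_comp_one {X₁ Y₁ Z₁ : K} (X₂ : K) (f : X₁ ⟶ Y₁) (g : Y₁ ⟶ Z₁) :
    E.rprod (f ≫ g) (𝟙 X₂) = E.rprod f (𝟙 X₂) ≫ E.rprod g (𝟙 X₂) := by
  symm
  apply E.rprod_uniq (E.pure_id X₂)
  · rw [Category.assoc, E.rprod_fst g (E.pure_id X₂), ← Category.assoc,
      E.rprod_fst f (E.pure_id X₂), Category.assoc]
  · have hf := E.rprod_snd f (E.pure_id X₂)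
    rw [Category.comp_id] at hf
    have hg := E.rprod_snd g (E.pure_id X₂)
    have := E.cons_comp (f := E.rprod f (𝟙 X₂)) (g := E.rprod g (𝟙 X₂) ≫ E.psnd Z₁ X₂)
      (u := E.psnd Y₁ X₂) (v := E.psnd X₁ X₂) (w := 𝟙 X₂)
      (E.psnd_pure Y₁ X₂) (E.psnd_pure X₁ X₂) (E.pure_id X₂) hf hg
    rwa [← Category.assoc] at this

lemma lprod_one_comp {X₂ Y₂ Z₂ : K} (X₁ : K) (f : X₂ ⟶ Y₂) (g : Y₂ ⟶ Z₂) :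
    E.lprod (𝟙 X₁) (f ≫ g) = E.lprod (𝟙 X₁) f ≫ E.lprod (𝟙 X₁) g := by
  symm
  apply E.lprod_uniq (E.pure_id X₁)
  · have hf := E.lprod_fst f (E.pure_id X₁)
    rw [Category.comp_id] at hf
    have hg := E.lprod_fst g (E.pure_id X₁)
    have := E.cons_comp (f := E.lprod (𝟙 X₁) f) (g := E.lprod (𝟙 X₁) g ≫ E.pfst X₁ Z₂)
      (u := E.pfst X₁ Y₂) (v := E.pfst X₁ X₂) (w := 𝟙 X₁)
      (E.pfst_pure X₁ Y₂) (E.pfst_pure X₁ X₂) (E.pure_id X₁) hf hg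
    rwa [← Category.assoc] at this
  · rw [Category.assoc, E.lprod_snd g (E.pure_id X₁), ← Category.assoc,
      E.lprod_snd f (E.pure_id X₁), Category.assoc]

end CEC

/-- associativity naturality for the left sequential product:
`a ∘ ((f₁ ⋉ f₂) ⋉ f₃) = (f₁ ⋉ (f₂ ⋉ f₃)) ∘ a`, given the three semi-pure
associativity naturalities of the lemma. -/
theorem CEC.seqL_assoc_naturality {K : Type u} [Category.{v} K] (E : CEC K)
    (h1 : ∀ {X₁ Y₁ X₂ Y₂ X₃ Y₃ : K} (f₁ : X₁ ⟶ Y₁) {v₂ : X₂ ⟶ Y₂} {v₃ : X₃ ⟶ Y₃},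
      E.isPure v₂ → E.isPure v₃ →
      E.rprod (E.rprod f₁ v₂) v₃ ≫ E.assoc Y₁ Y₂ Y₃ =
        E.assoc X₁ X₂ X₃ ≫ E.rprod f₁ (E.rprod v₂ v₃))
    (h2 : ∀ {X₁ Y₁ X₂ Y₂ X₃ Y₃ : K} {v₁ : X₁ ⟶ Y₁} (f₂ : X₂ ⟶ Y₂) {v₃ : X₃ ⟶ Y₃},
      E.isPure v₁ → E.isPure v₃ →
      E.rprod (E.lprod v₁ f₂) v₃ ≫ E.assoc Y₁ Y₂ Y₃ =
        E.assoc X₁ X₂ X₃ ≫ E.lprod v₁ (E.rprod f₂ v₃))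
    (h3 : ∀ {X₁ Y₁ X₂ Y₂ X₃ Y₃ : K} {v₁ : X₁ ⟶ Y₁} {v₂ : X₂ ⟶ Y₂} (f₃ : X₃ ⟶ Y₃),
      E.isPure v₁ → E.isPure v₂ →
      E.lprod (E.lprod v₁ v₂) f₃ ≫ E.assoc Y₁ Y₂ Y₃ =
        E.assoc X₁ X₂ X₃ ≫ E.lprod v₁ (E.lprod v₂ f₃)) :
    ∀ {X₁ Y₁ X₂ Y₂ X₃ Y₃ : K} (f₁ : X₁ ⟶ Y₁) (f₂ : X₂ ⟶ Y₂) (f₃ : X₃ ⟶ Y₃),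
      E.seqL (E.seqL f₁ f₂) f₃ ≫ E.assoc Y₁ Y₂ Y₃ =
        E.assoc X₁ X₂ X₃ ≫ E.seqL f₁ (E.seqL f₂ f₃) := by
  intro X₁ Y₁ X₂ Y₂ X₃ Y₃ f₁ f₂ f₃
  unfold CEC.seqL
  rw [E.rprod_comp_one X₃ (E.rprod f₁ (𝟙 X₂) ) (E.lprod (𝟙 Y₁) f₂),
    E.lprod_one_comp Y₁ (E.rprod f₂ (𝟙 X₃)) (E.lprod (𝟙 Y₂) f₃)]
  have e3 : E.lprod (𝟙 (E.pr Y₁ Y₂)) f₃ ≫ E.assoc Y₁ Y₂ Y₃ =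
      E.assoc Y₁ Y₂ X₃ ≫ E.lprod (𝟙 Y₁) (E.lprod (𝟙 Y₂) f₃) := by
    rw [← E.lprod_one_one Y₁ Y₂]
    exact h3 f₃ (E.pure_id Y₁) (E.pure_id Y₂)
  have e2 : E.rprod (E.lprod (𝟙 Y₁) f₂) (𝟙 X₃) ≫ E.assoc Y₁ Y₂ X₃ =
      E.assoc Y₁ X₂ X₃ ≫ E.lprod (𝟙 Y₁) (E.rprod f₂ (𝟙 X₃)) :=
    h2 f₂ (E.pure_id Y₁) (E.pure_id X₃)
  have e1 : E.rprod (E.rprod f₁ (𝟙 X₂)) (𝟙 X₃) ≫ E.assoc Y₁ X₂ X₃ =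
      E.assoc X₁ X₂ X₃ ≫ E.rprod f₁ (𝟙 (E.pr X₂ X₃)) := by
    rw [← E.rprod_one_one X₂ X₃]
    exact h1 f₁ (E.pure_id X₂) (E.pure_id X₃)
  simp only [Category.assoc]
  rw [e3, ← Category.assoc (E.rprod (E.lprod (𝟙 Y₁) f₂) (𝟙 X₃)), e2]
  simp only [Category.assoc]
  rw [← Category.assoc (E.rprod (E.rprod f₁ (𝟙 X₂)) (𝟙 X₃)), e1]
  simp only [Category.assoc]
end
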